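/- Let G and H be graphs on vertex sets V1 and V2, and let G × H denote their tensor product. For k ≥ 1, the number of k-cliques in G × H equals k! times the product of the number of k-cliques in G and the number of k-cliques in H. -/

import Mathlib

open MeasureTheory ProbabilityTheory Filter

noncomputable section

abbrev EdgeSlot (n : ℕ) := {s : Sym2 (Fin n) // ¬ s.IsDiag}

abbrev ERSpace (n : ℕ) := EdgeSlot n → Bool

/-- The Erdős–Rényi measure: each potential edge present independently with prob `p`. -/
def erMeasure (n : ℕ) (p : ℝ) : Measure (ERSpace n) :=
  Measure.pi fun _ => (PMF.bernoulli (min (Real.toNNReal p) 1) (min_le_right _ _)).toMeasure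

def edgeSlot {n : ℕ} {u v : Fin n} (h : u ≠ v) : EdgeSlot n :=
  ⟨s(u, v), by simpa using h⟩

/-- The graph associated to an outcome of edge indicators. -/
def erGraph {n : ℕ} (ω : ERSpace n) : SimpleGraph (Fin n) where
  Adj u v := ∃ h : u ≠ v, ω (edgeSlot h) = true
  symm := ⟨by
    rintro u v ⟨h, hw⟩
    refine ⟨h.symm, ?_⟩
    have he : edgeSlot h.symm = edgeSlot h := Subtype.ext (Sym2.eq_swap)
    rw [he]; exact hw⟩
  loopless := ⟨by rintro u ⟨h, -⟩; exact h rfl⟩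

/-- Number of `k`-cliques in a graph on a finite vertex set. -/
def cliqueCount {V : Type*} [Fintype V] (G : SimpleGraph V) (k : ℕ) : ℕ :=
  Set.ncard {s : Finset V | G.IsNClique k s}

/-- The tensor (categorical) product of two simple graphs. -/
def tensorProd {α β : Type*} (G : SimpleGraph α) (H : SimpleGraph β) :
    SimpleGraph (α × β) where
  Adj x y := G.Adj x.1 y.1 ∧ H.Adj x.2 y.2
  symm := ⟨fun _ _ ⟨h1, h2⟩ => ⟨h1.symm, h2.symm⟩⟩
  loopless := ⟨fun x h => G.loopless.irrefl x.1 h.1⟩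

instance {α β : Type*} (G : SimpleGraph α) (H : SimpleGraph β)
    [DecidableRel G.Adj] [DecidableRel H.Adj] : DecidableRel (tensorProd G H).Adj :=
  fun x y => show Decidable (G.Adj x.1 y.1 ∧ H.Adj x.2 y.2) from instDecidableAnd

/-- Number of `k`-cliques contained in the open neighborhood of `w`. -/
def nbhdCliqueCount {V : Type*} [Fintype V] (G : SimpleGraph V) (k : ℕ) (w : V) : ℕ :=
  Set.ncard {s : Finset V | G.IsNClique k s ∧ ∀ x ∈ s, G.Adj w x}

/-- Number of isolated vertices. -/
def isolatedCount {V : Type*} [Fintype V] (K : SimpleGraph V) : ℕ :=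
  Set.ncard {v : V | ∀ w, ¬ K.Adj v w}

end
/-! A homomorphism from the complete graph on `Fin k` is the same thing as a `k`-clique together
with a bijection from `Fin k` onto it, so there are `k! * cliqueCount G k` of them. Homomorphisms
into `tensorProd G H` are pairs of homomorphisms into `G` and into `H`, hence
`k! * cliqueCount (tensorProd G H) k = (k! * cliqueCount G k) * (k! * cliqueCount H k)`. -/

open Finset

namespace SimpleGraph

def homTensorProdEquiv {U V W : Type*} (F : SimpleGraph U) (G : SimpleGraph V)
    (H : SimpleGraph W) : (F →g tensorProd G H) ≃ (F →g G) × (F →g H) where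
  toFun f := (⟨Prod.fst ∘ f, fun h => (f.map_rel h).1⟩, ⟨Prod.snd ∘ f, fun h => (f.map_rel h).2⟩)
  invFun p := ⟨fun u => (p.1 u, p.2 u), fun h => ⟨p.1.map_rel h, p.2.map_rel h⟩⟩
  left_inv _ := rfl
  right_inv _ := rfl

variable {V : Type*} {G : SimpleGraph V} {k : ℕ}

theorem isNClique_image_top_hom [DecidableEq V] (f : (⊤ : SimpleGraph (Fin k)) →g G) :
    G.IsNClique k (univ.image f) := by
  refine ⟨?_, by rw [card_image_of_injective _ f.injective_of_top_hom, card_fin]⟩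
  simp only [coe_image, coe_univ, Set.image_univ]
  rintro _ ⟨i, rfl⟩ _ ⟨j, rfl⟩ hne
  exact f.map_rel (fun hij => hne (congrArg f hij))

noncomputable def topHomImageEqEquiv [DecidableEq V] {s : Finset V} (hs : G.IsNClique k s) :
    {f : (⊤ : SimpleGraph (Fin k)) →g G // univ.image f = s} ≃ (Fin k ≃ s) where
  toFun f := Equiv.ofBijective (fun i => ⟨f.1 i, f.2.subset (mem_image_of_mem _ (mem_univ i))⟩)
    ((Fintype.bijective_iff_injective_and_card _).mpr
      ⟨fun i j hij => f.1.injective_of_top_hom (congrArg Subtype.val hij), by simp [hs.card_eq]⟩)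
  invFun e := ⟨⟨fun i => e i, fun {i j} hij => hs.isClique (e i).2 (e j).2
      (fun h => hij (e.injective (Subtype.ext h)))⟩, by
    ext x
    simp only [mem_image, mem_univ, true_and]
    exact ⟨by rintro ⟨i, rfl⟩; exact (e i).2, fun hx => ⟨e.symm ⟨x, hx⟩, by simp⟩⟩⟩
  left_inv _ := rfl
  right_inv _ := Equiv.ext fun _ => rfl

theorem card_top_hom_eq_factorial_mul_cliqueCount [Fintype V] (G : SimpleGraph V) (k : ℕ) :
    Nat.card ((⊤ : SimpleGraph (Fin k)) →g G) = k.factorial * cliqueCount G k := by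
  classical
  let image (f : (⊤ : SimpleGraph (Fin k)) →g G) : {s : Finset V // G.IsNClique k s} :=
    ⟨univ.image f, isNClique_image_top_hom f⟩
  calc Nat.card ((⊤ : SimpleGraph (Fin k)) →g G)
      = Nat.card (Σ s, {f // image f = s}) := (Nat.card_congr (Equiv.sigmaFiberEquiv image)).symm
    _ = Nat.card (Σ s : {s : Finset V // G.IsNClique k s}, Fin k ≃ s) :=
        Nat.card_congr <| Equiv.sigmaCongrRight fun s =>
          (Equiv.subtypeEquivRight fun _ => Subtype.ext_iff).trans (topHomImageEqEquiv s.2)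
    _ = k.factorial * cliqueCount G k := by
        have labellings (s : {s : Finset V // G.IsNClique k s}) :
            Nat.card (Fin k ≃ s) = k.factorial := by
          rw [Nat.card_eq_fintype_card,
            Fintype.card_equiv (Finset.equivFinOfCardEq s.2.card_eq).symm, Fintype.card_fin]
        rw [Nat.card_sigma, Fintype.sum_congr _ _ labellings, sum_const, card_univ, smul_eq_mul,
          mul_comm, cliqueCount, ← Nat.card_coe_set_eq, Set.coe_ofPred, Nat.card_eq_fintype_card]

end SimpleGraph

theorem clique_count_tensorProd_general {V₁ V₂ : Type*} [Fintype V₁] [Fintype V₂]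
    (G : SimpleGraph V₁) (H : SimpleGraph V₂) (k : ℕ) :
    cliqueCount (tensorProd G H) k = k.factorial * cliqueCount G k * cliqueCount H k := by
  have h := Nat.card_congr (SimpleGraph.homTensorProdEquiv (⊤ : SimpleGraph (Fin k)) G H)
  simp only [Nat.card_prod, SimpleGraph.card_top_hom_eq_factorial_mul_cliqueCount] at h
  apply Nat.eq_of_mul_eq_mul_left k.factorial_pos
  rw [h]
  ring

theorem clique_count_tensorProd {V₁ V₂ : Type*} [Fintype V₁] [Fintype V₂]
    (G : SimpleGraph V₁) (H : SimpleGraph V₂) (k : ℕ) (hk : 1 ≤ k) :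
    cliqueCount (tensorProd G H) k = k.factorial * cliqueCount G k * cliqueCount H k :=
  clique_count_tensorProd_general G H k
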